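/- arXiv:2504.17895 — 4 statements merged into one kernel-verified Lean document; each statement's English description precedes it below -/
import Mathlib

section
/- Let X be a normed space and z(t_j, α_l) ∈ X for 0 ≤ j ≤ M, 0 ≤ l ≤ L with uniform steps Δt > 0 and Δα > 0. Then for all j, l: ‖z(t_j, α_l)‖² ≤ 3‖z(t_0, α_l)‖² + 3(jΔt) Σ_{s=1}^{j} Δt ‖D^t z(t_s, α_0)‖² + 3(jΔt)(lΔα) Σ_{s=1}^{j} Σ_{n=1}^{l} ΔtΔα ‖D^α D^t z(t_s, α_n)‖². -/
/-!
Telescoping in time and then in the parameter writes `z(t_j, α_l)` as `z(t_0, α_l)` plus a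
Riemann sum of `D^t z(·, α_0)` plus a double Riemann sum of `D^α D^t z`. The bound follows from
`‖a + b + c‖² ≤ 3(‖a‖² + ‖b‖² + ‖c‖²)` and Cauchy–Schwarz on each sum.
-/

open Finset

theorem sum_Icc_one_sub_pred {X : Type*} [AddCommGroup X] (f : ℕ → X) (j : ℕ) :
    ∑ s ∈ Icc 1 j, (f s - f (s - 1)) = f j - f 0 := by
  induction j with
  | zero => simp
  | succ n ih =>
    rw [sum_Icc_succ_top (by omega), ih, Nat.add_sub_cancel]
    abel

theorem eq_add_sum_smul_of_backward_diff {X : Type*} [AddCommGroup X] [Module ℝ X]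
    {f D : ℕ → X} {Δ : ℝ} (hΔ : Δ ≠ 0) (hD : ∀ s, D s = Δ⁻¹ • (f s - f (s - 1))) (j : ℕ) :
    f j = f 0 + ∑ s ∈ Icc 1 j, Δ • D s := by
  simp only [hD, smul_inv_smul₀ hΔ, sum_Icc_one_sub_pred]
  abel

theorem norm_add_add_sq_le {X : Type*} [SeminormedAddCommGroup X] (a b c : X) :
    ‖a + b + c‖ ^ 2 ≤ 3 * ‖a‖ ^ 2 + 3 * ‖b‖ ^ 2 + 3 * ‖c‖ ^ 2 := by
  have h := norm_add₃_le (a := a) (b := b) (c := c)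
  have := norm_nonneg (a + b + c)
  nlinarith [sq_nonneg (‖a‖ - ‖b‖), sq_nonneg (‖a‖ - ‖c‖), sq_nonneg (‖b‖ - ‖c‖)]

theorem norm_sum_smul_sq_le {X : Type*} [SeminormedAddCommGroup X] [NormedSpace ℝ X]
    {ι : Type*} (s : Finset ι) (h : ℝ) (f : ι → X) :
    ‖∑ i ∈ s, h • f i‖ ^ 2 ≤ (#s * h) * ∑ i ∈ s, h * ‖f i‖ ^ 2 := by
  calc ‖∑ i ∈ s, h • f i‖ ^ 2 ≤ (∑ i ∈ s, ‖h • f i‖) ^ 2 :=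
        pow_le_pow_left₀ (norm_nonneg _) (norm_sum_le _ _) 2
    _ ≤ #s * ∑ i ∈ s, ‖h • f i‖ ^ 2 := sq_sum_le_card_mul_sum_sq
    _ = (#s * h) * ∑ i ∈ s, h * ‖f i‖ ^ 2 := by
        simp only [norm_smul, mul_pow, Real.norm_eq_abs, sq_abs, mul_sum]
        ring_nf

theorem norm_sum_sum_smul_sq_le {X : Type*} [SeminormedAddCommGroup X] [NormedSpace ℝ X]
    {ι κ : Type*} (s : Finset ι) (t : Finset κ) (h k : ℝ) (f : ι → κ → X) :
    ‖∑ i ∈ s, ∑ j ∈ t, (h * k) • f i j‖ ^ 2 ≤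
      (#s * h) * (#t * k) * ∑ i ∈ s, ∑ j ∈ t, h * k * ‖f i j‖ ^ 2 := by
  have := norm_sum_smul_sq_le (s ×ˢ t) (h * k) (fun p => f p.1 p.2)
  rw [sum_product, sum_product, card_product, Nat.cast_mul] at this
  linarith

theorem eq_add_sum_add_sum_sum_of_backward_diff {X : Type*} [AddCommGroup X] [Module ℝ X]
    {z Dt DaDt : ℕ → ℕ → X} {Δt Δα : ℝ} (hΔt : Δt ≠ 0) (hΔα : Δα ≠ 0)
    (hDt : ∀ s l, Dt s l = Δt⁻¹ • (z s l - z (s - 1) l))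
    (hDaDt : ∀ s n, DaDt s n = Δα⁻¹ • (Dt s n - Dt s (n - 1))) (j l : ℕ) :
    z j l = z 0 l + ∑ s ∈ Icc 1 j, Δt • Dt s 0
      + ∑ s ∈ Icc 1 j, ∑ n ∈ Icc 1 l, (Δt * Δα) • DaDt s n := by
  have hα (s : ℕ) : Δt • Dt s l = Δt • Dt s 0 + ∑ n ∈ Icc 1 l, (Δt * Δα) • DaDt s n := by
    rw [eq_add_sum_smul_of_backward_diff hΔα (hDaDt s) l]
    simp only [smul_add, smul_sum, smul_smul]
  rw [eq_add_sum_smul_of_backward_diff hΔt (fun s => hDt s l) j, add_assoc, ← sum_add_distrib]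
  simp only [hα]

theorem pointwise_bound_two_indices_general
    {X : Type*} [NormedAddCommGroup X] [NormedSpace ℝ X]
    (z : ℕ → ℕ → X) (Δt Δα : ℝ) (hΔt : 0 < Δt) (hΔα : 0 < Δα)
    (Dt : ℕ → ℕ → X) (hDt : ∀ s l, Dt s l = Δt⁻¹ • (z s l - z (s - 1) l))
    (DaDt : ℕ → ℕ → X) (hDaDt : ∀ s n, DaDt s n = Δα⁻¹ • (Dt s n - Dt s (n - 1)))
    (j : ℕ) (l : ℕ) :
    ‖z j l‖ ^ 2 ≤
      3 * ‖z 0 l‖ ^ 2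
      + 3 * (j * Δt) * ∑ s ∈ Finset.Icc 1 j, Δt * ‖Dt s 0‖ ^ 2
      + 3 * (j * Δt) * (l * Δα) *
          ∑ s ∈ Finset.Icc 1 j, ∑ n ∈ Finset.Icc 1 l, Δt * Δα * ‖DaDt s n‖ ^ 2 := by
  have hB := norm_sum_smul_sq_le (Icc 1 j) Δt (Dt · 0)
  have hC := norm_sum_sum_smul_sq_le (Icc 1 j) (Icc 1 l) Δt Δα DaDt
  simp only [Nat.card_Icc, Nat.add_sub_cancel] at hB hC
  rw [eq_add_sum_add_sum_sum_of_backward_diff hΔt.ne' hΔα.ne' hDt hDaDt j l]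
  linarith [norm_add_add_sq_le (z 0 l) (∑ s ∈ Icc 1 j, Δt • Dt s 0)
    (∑ s ∈ Icc 1 j, ∑ n ∈ Icc 1 l, (Δt * Δα) • DaDt s n)]

/-- Lemma 1 of the paper: pointwise bound for a doubly-indexed family by its
initial values and its first/second order backward difference quotients. -/
theorem pointwise_bound_two_indices
    {X : Type*} [NormedAddCommGroup X] [NormedSpace ℝ X]
    (M L : ℕ) (z : ℕ → ℕ → X) (Δt Δα : ℝ) (hΔt : 0 < Δt) (hΔα : 0 < Δα)
    (Dt : ℕ → ℕ → X) (hDt : ∀ s l, Dt s l = Δt⁻¹ • (z s l - z (s - 1) l))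
    (DaDt : ℕ → ℕ → X) (hDaDt : ∀ s n, DaDt s n = Δα⁻¹ • (Dt s n - Dt s (n - 1)))
    (j : ℕ) (hj : j ≤ M) (l : ℕ) (hl : l ≤ L) :
    ‖z j l‖ ^ 2 ≤
      3 * ‖z 0 l‖ ^ 2
      + 3 * (j * Δt) * ∑ s ∈ Finset.Icc 1 j, Δt * ‖Dt s 0‖ ^ 2
      + 3 * (j * Δt) * (l * Δα) *
          ∑ s ∈ Finset.Icc 1 j, ∑ n ∈ Finset.Icc 1 l, Δt * Δα * ‖DaDt s n‖ ^ 2 :=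
  pointwise_bound_two_indices_general z Δt Δα hΔt hΔα Dt hDt DaDt hDaDt j l
end

section
/- Let X be a normed space and z(t_j, α_l, β_k) ∈ X for 0 ≤ j ≤ M, 0 ≤ l ≤ L, 0 ≤ k ≤ S with uniform steps Δt, Δα, Δβ > 0. Then ‖z(t_j, α_l, β_k)‖² ≤ 4‖z(t_0, α_l, β_k)‖² + 4(jΔt) Σ_{s=1}^{j} Δt ‖D^t z(t_s, α_0, β_k)‖² + 4(jΔt)(lΔα) Σ_{s=1}^{j} Σ_{n=1}^{l} ΔαΔt ‖D^t D^α z(t_s, α_n, β_0)‖² + 4(jΔt)(lΔα)(kΔβ) Σ_{s=1}^{j} Σ_{n=1}^{l} Σ_{r=1}^{k} ΔβΔαΔt ‖D^t D^α D^β z(t_s, α_n, β_r)‖². -/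
/-!
Telescoping in each index in turn writes `z j l k` as `z 0 l k` plus `Δt`, `Δt Δα` and
`Δt Δα Δβ` times a single, double and triple sum of difference quotients. The bound then
follows from `‖a + b + c + d‖² ≤ 4 (‖a‖² + ‖b‖² + ‖c‖² + ‖d‖²)` and the Cauchy–Schwarz
estimate `‖∑ i ∈ s, f i‖² ≤ #s ∑ i ∈ s, ‖f i‖²` applied to each sum.
-/

open Finset

lemma norm_sum_sq_le_card_mul_sum_sq {ι E : Type*} [SeminormedAddCommGroup E]
    (s : Finset ι) (f : ι → E) :
    ‖∑ i ∈ s, f i‖ ^ 2 ≤ #s * ∑ i ∈ s, ‖f i‖ ^ 2 :=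
  (pow_le_pow_left₀ (norm_nonneg _) (norm_sum_le _ _) 2).trans sq_sum_le_card_mul_sum_sq

lemma norm_add_add_add_sq_le {E : Type*} [SeminormedAddCommGroup E] (a b c d : E) :
    ‖a + b + c + d‖ ^ 2 ≤ 4 * ‖a‖ ^ 2 + 4 * ‖b‖ ^ 2 + 4 * ‖c‖ ^ 2 + 4 * ‖d‖ ^ 2 := by
  have := norm_sum_sq_le_card_mul_sum_sq univ ![a, b, c, d]
  simp only [Fin.sum_univ_four, card_univ, Fintype.card_fin] at this
  simpa [Matrix.cons_val, mul_add] using this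

lemma norm_smul_sum_sq_le {ι E : Type*} [SeminormedAddCommGroup E] [NormedSpace ℝ E]
    (c : ℝ) (s : Finset ι) (f : ι → E) :
    ‖c • ∑ i ∈ s, f i‖ ^ 2 ≤ c ^ 2 * #s * ∑ i ∈ s, ‖f i‖ ^ 2 := by
  rw [norm_smul, mul_pow, Real.norm_eq_abs, sq_abs, mul_assoc]
  exact mul_le_mul_of_nonneg_left (norm_sum_sq_le_card_mul_sum_sq s f) (sq_nonneg c)

lemma sum_Icc_sub_pred {G : Type*} [AddCommGroup G] (f : ℕ → G) (m : ℕ) :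
    ∑ i ∈ Icc 1 m, (f i - f (i - 1)) = f m - f 0 := by
  induction m with
  | zero => simp
  | succ m ih => rw [sum_Icc_succ_top (by omega), ih, Nat.add_sub_cancel, sub_add_sub_cancel']

lemma eq_add_smul_sum_of_backward_diff {𝕜 E : Type*} [DivisionRing 𝕜] [AddCommGroup E]
    [Module 𝕜 E] {h : 𝕜} (hh : h ≠ 0) {f g : ℕ → E}
    (hg : ∀ i, g i = h⁻¹ • (f i - f (i - 1))) (m : ℕ) :
    f m = f 0 + h • ∑ i ∈ Icc 1 m, g i := by
  simp_rw [hg, ← smul_sum, smul_inv_smul₀ hh, sum_Icc_sub_pred, add_sub_cancel]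

lemma eq_add_sums_of_backward_diffs {𝕜 E : Type*} [Field 𝕜] [AddCommGroup E] [Module 𝕜 E]
    {Δt Δα Δβ : 𝕜} (hΔt : Δt ≠ 0) (hΔα : Δα ≠ 0) (hΔβ : Δβ ≠ 0)
    {z Dt DtDa DtDaDb : ℕ → ℕ → ℕ → E}
    (hDt : ∀ s n r, Dt s n r = Δt⁻¹ • (z s n r - z (s - 1) n r))
    (hDtDa : ∀ s n r, DtDa s n r = Δα⁻¹ • (Dt s n r - Dt s (n - 1) r))
    (hDtDaDb : ∀ s n r, DtDaDb s n r = Δβ⁻¹ • (DtDa s n r - DtDa s n (r - 1)))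
    (j l k : ℕ) :
    z j l k = z 0 l k + Δt • ∑ s ∈ Icc 1 j, Dt s 0 k
      + (Δt * Δα) • ∑ s ∈ Icc 1 j, ∑ n ∈ Icc 1 l, DtDa s n 0
      + (Δt * Δα * Δβ) • ∑ s ∈ Icc 1 j, ∑ n ∈ Icc 1 l, ∑ r ∈ Icc 1 k, DtDaDb s n r := by
  have hz := eq_add_smul_sum_of_backward_diff hΔt (f := fun s ↦ z s l k) (fun s ↦ hDt s l k) j
  have hDt' s :=
    eq_add_smul_sum_of_backward_diff hΔα (f := fun n ↦ Dt s n k) (fun n ↦ hDtDa s n k) l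
  have hDtDa' s n :=
    eq_add_smul_sum_of_backward_diff hΔβ (f := fun r ↦ DtDa s n r) (fun r ↦ hDtDaDb s n r) k
  rw [hz]
  simp only [hDt', hDtDa', smul_add, sum_add_distrib, ← smul_sum]
  module

theorem pointwise_bound_three_indices_general
    {X : Type*} [NormedAddCommGroup X] [NormedSpace ℝ X]
    (z : ℕ → ℕ → ℕ → X) (Δt Δα Δβ : ℝ)
    (hΔt : 0 < Δt) (hΔα : 0 < Δα) (hΔβ : 0 < Δβ)
    (Dt : ℕ → ℕ → ℕ → X)
    (hDt : ∀ s n r, Dt s n r = Δt⁻¹ • (z s n r - z (s - 1) n r))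
    (DtDa : ℕ → ℕ → ℕ → X)
    (hDtDa : ∀ s n r, DtDa s n r = Δα⁻¹ • (Dt s n r - Dt s (n - 1) r))
    (DtDaDb : ℕ → ℕ → ℕ → X)
    (hDtDaDb : ∀ s n r, DtDaDb s n r = Δβ⁻¹ • (DtDa s n r - DtDa s n (r - 1)))
    (j : ℕ) (l : ℕ) (k : ℕ) :
    ‖z j l k‖ ^ 2 ≤
      4 * ‖z 0 l k‖ ^ 2
      + 4 * (j * Δt) * ∑ s ∈ Finset.Icc 1 j, Δt * ‖Dt s 0 k‖ ^ 2
      + 4 * (j * Δt) * (l * Δα) *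
          ∑ s ∈ Finset.Icc 1 j, ∑ n ∈ Finset.Icc 1 l, Δα * Δt * ‖DtDa s n 0‖ ^ 2
      + 4 * (j * Δt) * (l * Δα) * (k * Δβ) *
          ∑ s ∈ Finset.Icc 1 j, ∑ n ∈ Finset.Icc 1 l, ∑ r ∈ Finset.Icc 1 k,
            Δβ * Δα * Δt * ‖DtDaDb s n r‖ ^ 2 := by
  rw [eq_add_sums_of_backward_diffs hΔt.ne' hΔα.ne' hΔβ.ne' hDt hDtDa hDtDaDb]
  refine (norm_add_add_add_sq_le _ _ _ _).trans ?_
  have h1 := norm_smul_sum_sq_le Δt (Icc 1 j) (fun s ↦ Dt s 0 k)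
  have h2 := norm_smul_sum_sq_le (Δt * Δα) (Icc 1 j ×ˢ Icc 1 l) (fun p ↦ DtDa p.1 p.2 0)
  have h3 := norm_smul_sum_sq_le (Δt * Δα * Δβ) (Icc 1 j ×ˢ Icc 1 l ×ˢ Icc 1 k)
    (fun p ↦ DtDaDb p.1 p.2.1 p.2.2)
  simp only [sum_product, card_product, Nat.card_Icc, add_tsub_cancel_right, Nat.cast_mul]
    at h1 h2 h3
  simp only [← mul_sum]
  linear_combination 4 * h1 + 4 * h2 + 4 * h3

/-- Lemma 7 of the paper: pointwise bound for a triply-indexed family by initial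
values and first, second and third order backward difference quotients. -/
theorem pointwise_bound_three_indices
    {X : Type*} [NormedAddCommGroup X] [NormedSpace ℝ X]
    (M L S : ℕ) (z : ℕ → ℕ → ℕ → X) (Δt Δα Δβ : ℝ)
    (hΔt : 0 < Δt) (hΔα : 0 < Δα) (hΔβ : 0 < Δβ)
    (Dt : ℕ → ℕ → ℕ → X)
    (hDt : ∀ s n r, Dt s n r = Δt⁻¹ • (z s n r - z (s - 1) n r))
    (DtDa : ℕ → ℕ → ℕ → X)
    (hDtDa : ∀ s n r, DtDa s n r = Δα⁻¹ • (Dt s n r - Dt s (n - 1) r))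
    (DtDaDb : ℕ → ℕ → ℕ → X)
    (hDtDaDb : ∀ s n r, DtDaDb s n r = Δβ⁻¹ • (DtDa s n r - DtDa s n (r - 1)))
    (j : ℕ) (hj : j ≤ M) (l : ℕ) (hl : l ≤ L) (k : ℕ) (hk : k ≤ S) :
    ‖z j l k‖ ^ 2 ≤
      4 * ‖z 0 l k‖ ^ 2
      + 4 * (j * Δt) * ∑ s ∈ Finset.Icc 1 j, Δt * ‖Dt s 0 k‖ ^ 2
      + 4 * (j * Δt) * (l * Δα) *
          ∑ s ∈ Finset.Icc 1 j, ∑ n ∈ Finset.Icc 1 l, Δα * Δt * ‖DtDa s n 0‖ ^ 2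
      + 4 * (j * Δt) * (l * Δα) * (k * Δβ) *
          ∑ s ∈ Finset.Icc 1 j, ∑ n ∈ Finset.Icc 1 l, ∑ r ∈ Finset.Icc 1 k,
            Δβ * Δα * Δt * ‖DtDaDb s n r‖ ^ 2 :=
  pointwise_bound_three_indices_general z Δt Δα Δβ hΔt hΔα hΔβ Dt hDt DtDa hDtDa DtDaDb hDtDaDb j l
    k
end

section
/- With the setup of the POD modes: for 1 ≤ r ≤ d, letting P^r be the orthogonal projection onto span{φ_1, ..., φ_r}, it holds that (1/N) Σ_{j=1}^{N} ‖y_j - P^r y_j‖²_H = Σ_{k=r+1}^{d} λ_k. -/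
open scoped RealInnerProductSpace

/-!
The eigenrelation for the correlation matrix gives `⟪φ_k, y_i⟫ = √(N λ_k) v_k^i`. Together with
the orthonormality of the `v_k` this makes the modes `φ_k` orthonormal and gives
`∑_i ⟪φ_k, y_i⟫² = N λ_k`. As every snapshot lies in the span of the modes,
`y_j - P^r y_j = ∑_{k > r} ⟪φ_k, y_j⟫ φ_k`, and Pythagoras turns the mean squared error into
`∑_{k > r} λ_k`.
-/

open Finset

section Orthonormal

variable {𝕜 E ι : Type*} [RCLike 𝕜] [NormedAddCommGroup E] [InnerProductSpace 𝕜 E]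
  {φ : ι → E}

theorem Orthonormal.norm_sum_smul_sq (hφ : Orthonormal 𝕜 φ) (c : ι → 𝕜) (s : Finset ι) :
    ‖∑ k ∈ s, c k • φ k‖ ^ 2 = ∑ k ∈ s, ‖c k‖ ^ 2 := by
  rw [@norm_sq_eq_re_inner 𝕜, hφ.inner_sum, map_sum]
  refine sum_congr rfl fun k _ => ?_
  rw [RCLike.conj_mul, ← RCLike.ofReal_pow, RCLike.ofReal_re]

variable [Fintype ι]

theorem Orthonormal.sum_inner_smul_eq_of_mem_span (hφ : Orthonormal 𝕜 φ) {x : E}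
    (hx : x ∈ Submodule.span 𝕜 (Set.range φ)) : ∑ k, inner 𝕜 (φ k) x • φ k = x := by
  obtain ⟨c, rfl⟩ := (Submodule.mem_span_range_iff_exists_fun 𝕜).1 hx
  simp only [hφ.inner_right_fintype]

theorem Orthonormal.norm_sub_sum_inner_smul_sq_of_mem_span [DecidableEq ι]
    (hφ : Orthonormal 𝕜 φ) {x : E} (hx : x ∈ Submodule.span 𝕜 (Set.range φ)) (s : Finset ι) :
    ‖x - ∑ k ∈ s, inner 𝕜 (φ k) x • φ k‖ ^ 2 = ∑ k ∈ sᶜ, ‖inner 𝕜 (φ k) x‖ ^ 2 := by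
  have hx' := (hφ.sum_inner_smul_eq_of_mem_span hx).symm.trans (sum_add_sum_compl s _).symm
  rw [sub_eq_of_eq_add' hx', hφ.norm_sum_smul_sq]

end Orthonormal

section PODModes

variable {H ι : Type*} [NormedAddCommGroup H] [InnerProductSpace ℝ H] [Fintype ι]

/-- With `μ = N λ_k` and `v = v_k` this is the mode `φ_k`. -/
noncomputable def podMode (y : ι → H) (μ : ℝ) (v : ι → ℝ) : H := (√μ)⁻¹ • ∑ j, v j • y j

variable {y : ι → H}

theorem inner_podMode_right (x : H) (μ : ℝ) (v : ι → ℝ) :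
    ⟪x, podMode y μ v⟫ = (√μ)⁻¹ * ∑ j, v j * ⟪x, y j⟫ := by
  simp only [podMode, real_inner_smul_right, inner_sum]

theorem inner_podMode_left {μ : ℝ} {v : ι → ℝ}
    (hv : ∀ i, ∑ j, ⟪y i, y j⟫ * v j = μ * v i) (i : ι) :
    ⟪podMode y μ v, y i⟫ = √μ * v i := by
  rw [real_inner_comm, inner_podMode_right]
  simp only [mul_comm (v _), hv i]
  rw [← mul_assoc, inv_mul_eq_div, Real.div_sqrt]

theorem sum_sq_inner_podMode_left {μ : ℝ} (hμ : 0 ≤ μ) {v : ι → ℝ}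
    (hv : ∀ i, ∑ j, ⟪y i, y j⟫ * v j = μ * v i) (hv₁ : ∑ j, v j * v j = 1) :
    ∑ i, ⟪podMode y μ v, y i⟫ ^ 2 = μ := by
  have hv₁' : ∑ j, v j ^ 2 = 1 := by simpa only [sq] using hv₁
  simp only [inner_podMode_left hv, mul_pow, ← mul_sum, hv₁', mul_one, Real.sq_sqrt hμ]

theorem orthonormal_podMode {κ : Type*} [DecidableEq κ] {μ : κ → ℝ} (hμ : ∀ k, 0 < μ k)
    {v : κ → ι → ℝ} (hv : ∀ k i, ∑ j, ⟪y i, y j⟫ * v k j = μ k * v k i)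
    (horth : ∀ k m, ∑ j, v k j * v m j = if k = m then 1 else 0) :
    Orthonormal ℝ fun k => podMode y (μ k) (v k) := by
  rw [orthonormal_iff_ite]
  intro k m
  calc ⟪podMode y (μ k) (v k), podMode y (μ m) (v m)⟫
      = (√(μ m))⁻¹ * √(μ k) * ∑ j, v k j * v m j := by
        simp only [inner_podMode_right, inner_podMode_left (hv k), mul_sum]
        exact sum_congr rfl fun j _ => by ring
    _ = if k = m then 1 else 0 := by
        rw [horth]
        split_ifs with h
        · subst h
          rw [mul_one, inv_mul_cancel₀ (Real.sqrt_pos.2 (hμ k)).ne']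
        · rw [mul_zero]

end PODModes

theorem pod_eigenvalue_tail_identity_general
    {H : Type*} [NormedAddCommGroup H] [InnerProductSpace ℝ H]
    (N d : ℕ) (hN : 0 < N)
    (y : Fin N → H) (lam : Fin d → ℝ) (hlam : ∀ k, 0 < lam k)
    (v : Fin d → Fin N → ℝ)
    (heig : ∀ k i, (1 / (N : ℝ)) * ∑ j, ⟪y i, y j⟫ * v k j = lam k * v k i)
    (horth : ∀ k m, ∑ j, v k j * v m j = if k = m then (1 : ℝ) else 0)
    (hspan : ∀ i : Fin N, y i ∈ Submodule.span ℝ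
        (Set.range fun k : Fin d => (1 / (Real.sqrt N * Real.sqrt (lam k))) •
          ∑ j, v k j • y j))
    (φ : Fin d → H)
    (hφ : ∀ k, φ k = (1 / (Real.sqrt N * Real.sqrt (lam k))) • ∑ j, v k j • y j)
    (r : ℕ)
    (P : H → H)
    (hP : ∀ x, P x = ∑ k ∈ Finset.univ.filter (fun k : Fin d => (k : ℕ) < r),
        ⟪φ k, x⟫ • φ k) :
    (1 / (N : ℝ)) * ∑ j, ‖y j - P (y j)‖ ^ 2 =
      ∑ k ∈ Finset.univ.filter (fun k : Fin d => r ≤ (k : ℕ)), lam k := by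
  have hN' : (N : ℝ) ≠ 0 := by exact_mod_cast hN.ne'
  have hμ : ∀ k, 0 < (N : ℝ) * lam k := fun k => mul_pos (by exact_mod_cast hN) (hlam k)
  have hmode : φ = fun k => podMode y (N * lam k) (v k) := funext fun k => by
    rw [hφ, podMode, Real.sqrt_mul (Nat.cast_nonneg N), one_div]
  have heig' : ∀ k i, ∑ j, ⟪y i, y j⟫ * v k j = (N * lam k) * v k i := fun k i => by
    rw [mul_assoc, ← heig k i, ← mul_assoc, mul_one_div_cancel hN', one_mul]
  have hON : Orthonormal ℝ φ := hmode ▸ orthonormal_podMode hμ heig' horth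
  have hspan' : ∀ j, y j ∈ Submodule.span ℝ (Set.range φ) := by
    simpa only [← hφ] using hspan
  have hres : ∀ j, ‖y j - P (y j)‖ ^ 2 =
      ∑ k ∈ Finset.univ.filter (fun k : Fin d => r ≤ (k : ℕ)), ⟪φ k, y j⟫ ^ 2 := fun j => by
    rw [hP, hON.norm_sub_sum_inner_smul_sq_of_mem_span (hspan' j), compl_filter]
    simp only [not_lt, Real.norm_eq_abs, sq_abs]
  calc (1 / (N : ℝ)) * ∑ j, ‖y j - P (y j)‖ ^ 2
      = ∑ k ∈ Finset.univ.filter (fun k : Fin d => r ≤ (k : ℕ)),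
          (1 / (N : ℝ)) * ∑ j, ⟪φ k, y j⟫ ^ 2 := by
        simp only [hres]
        rw [sum_comm, mul_sum]
    _ = ∑ k ∈ Finset.univ.filter (fun k : Fin d => r ≤ (k : ℕ)), lam k := by
        refine sum_congr rfl fun k _ => ?_
        rw [hmode, sum_sq_inner_podMode_left (hμ k).le (heig' k) (by simpa using horth k k),
          ← mul_assoc, one_div_mul_cancel hN', one_mul]

/-- POD eigenvalue-tail identity: the mean squared projection error of the
snapshots onto the span of the first `r` POD modes equals the tail of the
eigenvalues, `(1/N) ∑_j ‖y_j - P^r y_j‖² = ∑_{k > r} λ_k`.  Here `P^r` is the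
orthogonal projection onto `span{φ_1, …, φ_r}`, which by orthonormality of the
modes is `P^r x = ∑_{k < r} ⟪φ_k, x⟫ φ_k`. -/
theorem pod_eigenvalue_tail_identity
    {H : Type*} [NormedAddCommGroup H] [InnerProductSpace ℝ H]
    (N d : ℕ) (hN : 0 < N)
    (y : Fin N → H) (lam : Fin d → ℝ) (hlam : ∀ k, 0 < lam k)
    (v : Fin d → Fin N → ℝ)
    (heig : ∀ k i, (1 / (N : ℝ)) * ∑ j, ⟪y i, y j⟫ * v k j = lam k * v k i)
    (horth : ∀ k m, ∑ j, v k j * v m j = if k = m then (1 : ℝ) else 0)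
    (hspan : ∀ i : Fin N, y i ∈ Submodule.span ℝ
        (Set.range fun k : Fin d => (1 / (Real.sqrt N * Real.sqrt (lam k))) •
          ∑ j, v k j • y j))
    (φ : Fin d → H)
    (hφ : ∀ k, φ k = (1 / (Real.sqrt N * Real.sqrt (lam k))) • ∑ j, v k j • y j)
    (r : ℕ) (hr1 : 1 ≤ r) (hrd : r ≤ d)
    (P : H → H)
    (hP : ∀ x, P x = ∑ k ∈ Finset.univ.filter (fun k : Fin d => (k : ℕ) < r),
        ⟪φ k, x⟫ • φ k) :
    (1 / (N : ℝ)) * ∑ j, ‖y j - P (y j)‖ ^ 2 =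
      ∑ k ∈ Finset.univ.filter (fun k : Fin d => r ≤ (k : ℕ)), lam k :=
  pod_eigenvalue_tail_identity_general N d hN y lam hlam v heig horth hspan φ hφ r P hP
end

section
/- Let H be a Hilbert space, f : [a,b] → H be C², I₂f its affine endpoint interpolant, and suppose ∫_a^b ‖f(μ)‖² dμ ≤ 3 ∫_a^b ‖(I₂f)(μ)‖² dμ + 3 ∫_a^b ‖f(μ) - (I₂f)(μ)‖² dμ is used. Then ∫_a^b ‖f(μ)‖² dμ ≤ C ( (b-a)(‖f(a)‖² + ‖f(b)‖²) + (b-a)⁴ ∫_a^b ‖f''(ν)‖² dν ) for an absolute constant C. -/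
/-!
Split `f` into its affine endpoint interpolant `I₂f`, which is bounded by `‖f a‖ + ‖f b‖` on
`[a, b]`, and the error `e = f - I₂f`. Since `e a = e b = 0`, the derivative `e'` has mean zero,
and it differs from `f'` by a constant, so its oscillation is at most `∫ ‖f''‖`. Hence
`‖e'‖ ≤ ∫ ‖f''‖` and `‖e‖ ≤ (b - a) ∫ ‖f''‖`. Squaring, Cauchy–Schwarz
`(∫ ‖f''‖)² ≤ (b - a) ∫ ‖f''‖²` and integrating over `[a, b]` give the bound with `C = 3`.
-/

open Set MeasureTheory intervalIntegral

section

variable {E : Type*} [NormedAddCommGroup E] [NormedSpace ℝ E] {a b : ℝ}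

lemma sq_integral_le_mul_integral_sq {h : ℝ → ℝ} (hab : a ≤ b)
    (hi : IntervalIntegrable h volume a b)
    (hi2 : IntervalIntegrable (fun t => h t ^ 2) volume a b) :
    (∫ t in a..b, h t) ^ 2 ≤ (b - a) * ∫ t in a..b, h t ^ 2 := by
  set I := ∫ t in a..b, h t
  set J := ∫ t in a..b, h t ^ 2
  have hexpand : ∫ t in a..b, ((b - a) * h t - I) ^ 2 = (b - a) * ((b - a) * J - I ^ 2) := by
    have hsq : (fun t => ((b - a) * h t - I) ^ 2)
        = fun t => (b - a) ^ 2 * h t ^ 2 - 2 * (b - a) * I * h t + I ^ 2 := by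
      funext t; ring
    rw [hsq, integral_add ((hi2.const_mul _).sub (hi.const_mul _)) intervalIntegrable_const,
      integral_sub (hi2.const_mul _) (hi.const_mul _), intervalIntegral.integral_const_mul,
      intervalIntegral.integral_const_mul, intervalIntegral.integral_const, smul_eq_mul]
    ring
  have hnonneg : 0 ≤ (b - a) * ((b - a) * J - I ^ 2) :=
    hexpand ▸ integral_nonneg hab fun _ _ => sq_nonneg _
  rcases hab.eq_or_lt with rfl | hlt
  · simp [I]
  · linarith [(mul_nonneg_iff_of_pos_left (sub_pos.2 hlt)).1 hnonneg]

lemma norm_sub_le_integral_norm_derivWithin_Icc {g : ℝ → E} (hg : ContDiffOn ℝ 1 g (Icc a b))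
    {x y : ℝ} (hx : x ∈ Icc a b) (hy : y ∈ Icc a b) :
    ‖g y - g x‖ ≤ ∫ t in a..b, ‖derivWithin g (Icc a b) t‖ := by
  wlog hxy : x < y generalizing x y
  · rcases (not_lt.1 hxy).lt_or_eq with h | rfl
    · rw [norm_sub_rev]; exact this hy hx h
    · simpa using integral_nonneg (hx.1.trans hx.2) fun _ _ => norm_nonneg _
  have hab : a < b := (hx.1.trans_lt hxy).trans_le hy.2
  have hsub : Icc x y ⊆ Icc a b := Icc_subset_Icc hx.1 hy.2
  have hD : ContinuousOn (fun t => ‖derivWithin g (Icc a b) t‖) (Icc a b) :=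
    (hg.continuousOn_derivWithin (uniqueDiffOn_Icc hab) le_rfl).norm
  calc ‖g y - g x‖ ≤ ∫ t in x..y, ‖derivWithin g (Icc a b) t‖ := by
        refine norm_sub_le_integral_of_norm_deriv_le_of_le hxy.le (hg.continuousOn.mono hsub)
          ((hg.differentiableOn one_ne_zero).mono (Ioo_subset_Icc_self.trans hsub))
          (ae_of_all _ fun t ht => ?_) ((hD.mono hsub).intervalIntegrable_of_Icc hxy.le)
        rw [derivWithin_of_mem_nhds (Icc_mem_nhds (hx.1.trans_lt ht.1) (ht.2.trans_le hy.2))]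
    _ ≤ ∫ t in a..b, ‖derivWithin g (Icc a b) t‖ :=
        integral_mono_interval hx.1 hxy.le hy.2 (ae_of_all _ fun _ => norm_nonneg _)
          (hD.intervalIntegrable_of_Icc hab.le)

lemma norm_le_of_integral_eq_zero_of_norm_sub_le [CompleteSpace E] {φ : ℝ → E} {M : ℝ}
    (hab : a < b) (hφ : IntervalIntegrable φ volume a b) (hmean : ∫ t in a..b, φ t = 0)
    (hosc : ∀ x ∈ Icc a b, ∀ y ∈ Icc a b, ‖φ y - φ x‖ ≤ M) {t : ℝ} (ht : t ∈ Icc a b) :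
    ‖φ t‖ ≤ M := by
  have hrep : ∫ u in a..b, (φ t - φ u) = (b - a) • φ t := by
    rw [integral_sub intervalIntegrable_const hφ, hmean, intervalIntegral.integral_const, sub_zero]
  have hbound : (b - a) * ‖φ t‖ ≤ (b - a) * M := by
    calc (b - a) * ‖φ t‖ = ‖∫ u in a..b, (φ t - φ u)‖ := by
          rw [hrep, norm_smul, Real.norm_of_nonneg (sub_nonneg.2 hab.le)]
      _ ≤ M * |b - a| := norm_integral_le_of_norm_le_const fun u hu =>
          hosc u (Ioc_subset_Icc_self (uIoc_of_le hab.le ▸ hu)) t ht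
      _ = (b - a) * M := by rw [abs_of_pos (sub_pos.2 hab), mul_comm]
  exact le_of_mul_le_mul_left hbound (sub_pos.2 hab)

lemma norm_sub_left_le_of_endpoints_eq [CompleteSpace E] {e : ℝ → E} {M : ℝ} (hab : a < b)
    (he : ContDiffOn ℝ 1 e (Icc a b)) (heq : e a = e b)
    (hosc : ∀ x ∈ Icc a b, ∀ y ∈ Icc a b,
      ‖derivWithin e (Icc a b) y - derivWithin e (Icc a b) x‖ ≤ M)
    {μ : ℝ} (hμ : μ ∈ Icc a b) : ‖e μ - e a‖ ≤ (b - a) * M := by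
  have ha : a ∈ Icc a b := left_mem_Icc.2 hab.le
  have hM : 0 ≤ M := by simpa using hosc a ha a ha
  have hmean : ∫ t in a..b, derivWithin e (Icc a b) t = 0 := by
    rw [integral_derivWithin_Icc_of_contDiffOn_Icc he hab.le, heq, sub_self]
  have hderiv_le : ∀ t ∈ Icc a b, ‖derivWithin e (Icc a b) t‖ ≤ M :=
    fun t => norm_le_of_integral_eq_zero_of_norm_sub_le hab
      ((he.continuousOn_derivWithin (uniqueDiffOn_Icc hab) le_rfl).intervalIntegrable_of_Icc hab.le)
      hmean hosc
  calc ‖e μ - e a‖ ≤ M * (μ - a) :=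
        norm_image_sub_le_of_norm_deriv_le_segment'
          (fun t ht => ((he.differentiableOn one_ne_zero) t ht).hasDerivWithinAt)
          (fun t ht => hderiv_le t (Ico_subset_Icc_self ht)) μ hμ
    _ ≤ (b - a) * M := by rw [mul_comm]; gcongr; exact hμ.2

/-- The paper's `I₂f`. -/
noncomputable def affineInterpolant (a b : ℝ) (f : ℝ → E) (μ : ℝ) : E :=
  ((b - μ) / (b - a)) • f a + ((μ - a) / (b - a)) • f b

section affineInterpolant

variable {f : ℝ → E}

lemma affineInterpolant_left (hab : a ≠ b) : affineInterpolant a b f a = f a := by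
  simp [affineInterpolant, div_self (sub_ne_zero.2 hab.symm)]

lemma affineInterpolant_right (hab : a ≠ b) : affineInterpolant a b f b = f b := by
  simp [affineInterpolant, div_self (sub_ne_zero.2 hab.symm)]

lemma hasDerivAt_affineInterpolant (μ : ℝ) :
    HasDerivAt (affineInterpolant a b f) ((b - a)⁻¹ • (f b - f a)) μ := by
  have h := (((hasDerivAt_id μ).const_sub b).div_const (b - a)).smul_const (f a) |>.add
    ((((hasDerivAt_id μ).sub_const a).div_const (b - a)).smul_const (f b))
  convert h using 1
  · rfl
  · rw [smul_sub, neg_div, neg_smul, one_div]; abel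

lemma contDiff_affineInterpolant : ContDiff ℝ 1 (affineInterpolant a b f) := by
  unfold affineInterpolant; fun_prop

lemma norm_affineInterpolant_le {μ : ℝ} (hμ : μ ∈ Icc a b) :
    ‖affineInterpolant a b f μ‖ ≤ ‖f a‖ + ‖f b‖ := by
  have hba : 0 ≤ b - a := sub_nonneg.2 (hμ.1.trans hμ.2)
  have hl : ‖(b - μ) / (b - a)‖ ≤ 1 := by
    rw [Real.norm_of_nonneg (div_nonneg (sub_nonneg.2 hμ.2) hba)]
    exact div_le_one_of_le₀ (by linarith [hμ.1]) hba
  have hr : ‖(μ - a) / (b - a)‖ ≤ 1 := by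
    rw [Real.norm_of_nonneg (div_nonneg (sub_nonneg.2 hμ.1) hba)]
    exact div_le_one_of_le₀ (by linarith [hμ.2]) hba
  calc ‖affineInterpolant a b f μ‖
      ≤ ‖(b - μ) / (b - a)‖ * ‖f a‖ + ‖(μ - a) / (b - a)‖ * ‖f b‖ := by
        rw [← norm_smul, ← norm_smul]; exact norm_add_le _ _
    _ ≤ ‖f a‖ + ‖f b‖ := by
        gcongr <;> exact mul_le_of_le_one_left (norm_nonneg _) ‹_›

end affineInterpolant

lemma norm_sub_affineInterpolant_le [CompleteSpace E] {f : ℝ → E} (hab : a < b)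
    (hf : ContDiffOn ℝ 2 f (Icc a b)) {μ : ℝ} (hμ : μ ∈ Icc a b) :
    ‖f μ - affineInterpolant a b f μ‖
      ≤ (b - a) * ∫ t in a..b, ‖iteratedDerivWithin 2 f (Icc a b) t‖ := by
  set s := Icc a b
  have hs : UniqueDiffOn ℝ s := uniqueDiffOn_Icc hab
  set e := fun t => f t - affineInterpolant a b f t
  have he : ContDiffOn ℝ 1 e s := (hf.of_le one_le_two).sub contDiff_affineInterpolant.contDiffOn
  have hde : ∀ t ∈ s, derivWithin e s t = derivWithin f s t - (b - a)⁻¹ • (f b - f a) :=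
    fun t ht => ((hf.differentiableOn two_ne_zero t ht).hasDerivWithinAt.sub
      (hasDerivAt_affineInterpolant t).hasDerivWithinAt).derivWithin (hs t ht)
  have hf'' : iteratedDerivWithin 2 f s = derivWithin (derivWithin f s) s := by
    rw [iteratedDerivWithin_succ' (n := 1), iteratedDerivWithin_one]
  have hosc : ∀ x ∈ s, ∀ y ∈ s, ‖derivWithin e s y - derivWithin e s x‖
      ≤ ∫ t in a..b, ‖iteratedDerivWithin 2 f s t‖ := fun x hx y hy => by
    rw [hde x hx, hde y hy, sub_sub_sub_cancel_right, hf'']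
    exact norm_sub_le_integral_norm_derivWithin_Icc (hf.derivWithin hs le_rfl) hx hy
  have heq : e a = e b := by
    simp [e, affineInterpolant_left hab.ne, affineInterpolant_right hab.ne]
  simpa [e, affineInterpolant_left hab.ne] using
    norm_sub_left_le_of_endpoints_eq hab he heq hosc hμ

lemma sq_norm_le_of_contDiffOn_two [CompleteSpace E] {f : ℝ → E} (hab : a < b)
    (hf : ContDiffOn ℝ 2 f (Icc a b)) {μ : ℝ} (hμ : μ ∈ Icc a b) :
    ‖f μ‖ ^ 2 ≤ 3 * (‖f a‖ ^ 2 + ‖f b‖ ^ 2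
      + (b - a) ^ 3 * ∫ t in a..b, ‖iteratedDerivWithin 2 f (Icc a b) t‖ ^ 2) := by
  set D := iteratedDerivWithin 2 f (Icc a b)
  set M := ∫ t in a..b, ‖D t‖
  have hD : ContinuousOn (fun t => ‖D t‖) (Icc a b) :=
    (hf.continuousOn_iteratedDerivWithin le_rfl (uniqueDiffOn_Icc hab)).norm
  have hCS : M ^ 2 ≤ (b - a) * ∫ t in a..b, ‖D t‖ ^ 2 :=
    sq_integral_le_mul_integral_sq hab.le (hD.intervalIntegrable_of_Icc hab.le)
      ((hD.pow 2).intervalIntegrable_of_Icc hab.le)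
  have hpt : ‖f μ‖ ≤ ‖f a‖ + ‖f b‖ + (b - a) * M :=
    calc ‖f μ‖ ≤ ‖affineInterpolant a b f μ‖ + ‖f μ - affineInterpolant a b f μ‖ :=
          norm_le_insert' _ _
      _ ≤ ‖f a‖ + ‖f b‖ + (b - a) * M :=
          add_le_add (norm_affineInterpolant_le hμ) (norm_sub_affineInterpolant_le hab hf hμ)
  have hM : 0 ≤ (b - a) * M :=
    mul_nonneg (sub_nonneg.2 hab.le) (integral_nonneg hab.le fun _ _ => norm_nonneg _)
  calc ‖f μ‖ ^ 2 ≤ (‖f a‖ + ‖f b‖ + (b - a) * M) ^ 2 := by gcongr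
    _ ≤ 3 * (‖f a‖ ^ 2 + ‖f b‖ ^ 2 + (b - a) ^ 2 * M ^ 2) := by
        nlinarith [sq_nonneg (‖f a‖ - ‖f b‖), sq_nonneg (‖f a‖ - (b - a) * M),
          sq_nonneg (‖f b‖ - (b - a) * M)]
    _ ≤ 3 * (‖f a‖ ^ 2 + ‖f b‖ ^ 2 + (b - a) ^ 3 * ∫ t in a..b, ‖D t‖ ^ 2) := by
        have := mul_le_mul_of_nonneg_left hCS (sq_nonneg (b - a))
        nlinarith

end

/-- `L²`-in-parameter bound via the affine endpoint interpolant (case `m = 2`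
of Lemma 5 of the paper):
`∫_a^b ‖f‖² ≤ C ((b-a)(‖f(a)‖² + ‖f(b)‖²) + (b-a)⁴ ∫_a^b ‖f''‖²)`. -/
theorem L2_parameter_interpolation_bound
    {H : Type*} [NormedAddCommGroup H] [InnerProductSpace ℝ H] [CompleteSpace H] :
    ∃ C : ℝ, 0 < C ∧
      ∀ (a b : ℝ), a < b →
        ∀ f : ℝ → H, ContDiffOn ℝ 2 f (Set.Icc a b) →
          (∫ μ in a..b, ‖f μ‖ ^ 2) ≤
            C * ((b - a) * (‖f a‖ ^ 2 + ‖f b‖ ^ 2)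
              + (b - a) ^ 4 * ∫ ν in a..b, ‖iteratedDerivWithin 2 f (Set.Icc a b) ν‖ ^ 2) := by
  refine ⟨3, by norm_num, fun a b hab f hf => ?_⟩
  calc (∫ μ in a..b, ‖f μ‖ ^ 2)
      ≤ ∫ _ in a..b, 3 * (‖f a‖ ^ 2 + ‖f b‖ ^ 2
          + (b - a) ^ 3 * ∫ ν in a..b, ‖iteratedDerivWithin 2 f (Icc a b) ν‖ ^ 2) :=
        integral_mono_on hab.le ((hf.continuousOn.norm.pow 2).intervalIntegrable_of_Icc hab.le)
          intervalIntegrable_const fun μ hμ => sq_norm_le_of_contDiffOn_two hab hf hμ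
    _ = 3 * ((b - a) * (‖f a‖ ^ 2 + ‖f b‖ ^ 2)
          + (b - a) ^ 4 * ∫ ν in a..b, ‖iteratedDerivWithin 2 f (Icc a b) ν‖ ^ 2) := by
        rw [intervalIntegral.integral_const, smul_eq_mul]; ring
end
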